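/- arXiv:1303.6625 — 9 statements merged into one kernel-verified Lean document; each statement's English description precedes it below -/
import Mathlib

section
/- Let L : ℂ^{2n} → ℂ^{2n} be the complexification of the linearization of the dNLS field at the relative equilibrium ā, i.e. (Lx)_j = ω x_j + h(μ²) x_j + 2μ²h′(μ²) (a_j · x_j) a_j + (x_{j+1} − 2x_j + x_{j−1}), where a_j = (cos jζ, sin jζ) ∈ ℝ² ⊂ ℂ², a_j · x_j denotes the bilinear (not Hermitian) dot product, indices are modulo n, and ω = 4 sin²(ζ/2) − h(μ²). Then for every k ∈ {1,…,n}, every w ∈ ℂ² and every ν ∈ ℝ: L(T_k(w)) = T_k(B_k w) and (−ν·i𝒥 + L)(T_k(w)) = T_k(m_k(ν) w), where 𝒥 = diag(J,…,J). -/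
private lemma modper' {α : Sort*} (n : ℕ) (hn : 0 < n) (f : ℕ → α)
    (hf : ∀ m, f (m + n) = f m) : ∀ m, f (m % n) = f m := by
  intro m
  induction m using Nat.strong_induction_on with
  | _ m ih =>
    rcases lt_or_ge m n with hm | hm
    · rw [Nat.mod_eq_of_lt hm]
    · have h1 : m = (m - n) + n := by omega
      rw [h1, hf, Nat.add_mod_right]
      exact ih (m - n) (by omega)

private lemma sinsqhalf (x : ℝ) : Real.sin (x/2)^2 = (1 - Real.cos x)/2 := by
  have h1 := Real.sin_sq (x/2)
  have h2 := Real.cos_sq (x/2)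
  rw [h1, h2, show 2*(x/2) = x by ring]; ring

private lemma dotlem (x y : ℂ) (θ : ℝ) :
    (Real.cos θ : ℂ)*((Real.cos θ : ℂ)*x - (Real.sin θ : ℂ)*y)
      + (Real.sin θ : ℂ)*((Real.sin θ : ℂ)*x + (Real.cos θ : ℂ)*y) = x := by
  have h : ((Real.sin θ : ℂ))^2 + ((Real.cos θ : ℂ))^2 = 1 := by
    have := Real.sin_sq_add_cos_sq θ
    exact_mod_cast this
  linear_combination x * h

/-- Let `n ≥ 3`, `ζ = 2π/n`, `α_k = 4 cos ζ sin²(kζ/2)`, `γ_k = 2 sin(kζ) sin ζ`,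
`h : ℝ → ℝ` differentiable, `μ > 0`, `ω = 4 sin²(ζ/2) − h(μ²)`.
`ℂ^{2n}` is modelled as `ZMod n → ℂ × ℂ`, with `T_k(w)_j = n^{−1/2} e^{ijkζ} e^{Jjζ} w` where
`e^{Jθ}` is the rotation matrix.  Let `a_j = (cos jζ, sin jζ) ∈ ℝ² ⊂ ℂ²` and let
`L : ℂ^{2n} → ℂ^{2n}` be the complexified linearization at the relative equilibrium `ā`:
`(Lx)_j = ω x_j + h(μ²) x_j + 2μ²h′(μ²)(a_j · x_j) a_j + (x_{j+1} − 2x_j + x_{j−1})`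
with `·` the bilinear dot product.  With `B_k = −α_k I + γ_k (iJ) + 2μ²h′(μ²) diag(1,0)`
(acting on `ℂ²`, `iJ w = (−i w₂, i w₁)`) and `m_k(ν) = −ν (iJ) + B_k`, one has, for every
`k ∈ {1,…,n}`, `w ∈ ℂ²`, `ν ∈ ℝ`:
`L(T_k w) = T_k(B_k w)` and `(−ν i𝒥 + L)(T_k w) = T_k(m_k(ν) w)`,
where `𝒥` acts componentwise as `J`, so `(−ν i𝒥 x)_j = (iν x_{j,2}, −iν x_{j,1})`. -/
theorem stmt_5 (n : ℕ) [NeZero n] (hn : 3 ≤ n) (ζ : ℝ) (hζ : ζ = 2 * Real.pi / n)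
    (α γ : ℕ → ℝ)
    (hα : ∀ k : ℕ, α k = 4 * Real.cos ζ * Real.sin (k * ζ / 2) ^ 2)
    (hγ : ∀ k : ℕ, γ k = 2 * Real.sin (k * ζ) * Real.sin ζ)
    (h : ℝ → ℝ) (hdiff : Differentiable ℝ h) (μ : ℝ) (hμ : 0 < μ)
    (ω : ℝ) (hω : ω = 4 * Real.sin (ζ / 2) ^ 2 - h (μ ^ 2))
    (rot : ℝ → ℂ × ℂ → ℂ × ℂ)
    (hrot : ∀ (θ : ℝ) (w : ℂ × ℂ),
      rot θ w = ((Real.cos θ : ℂ) * w.1 - (Real.sin θ : ℂ) * w.2,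
                 (Real.sin θ : ℂ) * w.1 + (Real.cos θ : ℂ) * w.2))
    (T : ℕ → (ℂ × ℂ) → (ZMod n → ℂ × ℂ))
    (hT : ∀ (k : ℕ) (w : ℂ × ℂ) (j : ZMod n),
      T k w j = ((Real.sqrt n : ℂ))⁻¹ •
        (Complex.exp (Complex.I * (k : ℂ) * (j.val : ℂ) * (ζ : ℂ)) • rot (j.val * ζ) w))
    (a : ZMod n → ℂ × ℂ)
    (ha : ∀ j : ZMod n, a j = ((Real.cos (j.val * ζ) : ℂ), (Real.sin (j.val * ζ) : ℂ)))
    (dotc : ℂ × ℂ → ℂ × ℂ → ℂ)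
    (hdotc : ∀ u v : ℂ × ℂ, dotc u v = u.1 * v.1 + u.2 * v.2)
    (L : (ZMod n → ℂ × ℂ) → (ZMod n → ℂ × ℂ))
    (hL : ∀ (x : ZMod n → ℂ × ℂ) (j : ZMod n),
      L x j = ((ω : ℂ) + (h (μ ^ 2) : ℂ)) • x j
        + ((2 * μ ^ 2 * deriv h (μ ^ 2) : ℝ) : ℂ) • (dotc (a j) (x j) • a j)
        + (x (j + 1) - (2 : ℂ) • x j + x (j - 1)))
    (B : ℕ → (ℂ × ℂ) → (ℂ × ℂ))
    (hB : ∀ (k : ℕ) (w : ℂ × ℂ),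
      B k w = (((-(α k) + 2 * μ ^ 2 * deriv h (μ ^ 2) : ℝ) : ℂ) * w.1
                  - Complex.I * (γ k : ℂ) * w.2,
               Complex.I * (γ k : ℂ) * w.1 + ((-(α k) : ℝ) : ℂ) * w.2))
    (m : ℕ → ℝ → (ℂ × ℂ) → (ℂ × ℂ))
    (hm : ∀ (k : ℕ) (ν : ℝ) (w : ℂ × ℂ),
      m k ν w = B k w + (Complex.I * (ν : ℂ) * w.2, -(Complex.I * (ν : ℂ) * w.1))) :
    ∀ k ∈ Finset.Icc 1 n, ∀ (w : ℂ × ℂ) (ν : ℝ),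
      L (T k w) = T k (B k w) ∧
      (fun j => (Complex.I * (ν : ℂ) * (T k w j).2, -(Complex.I * (ν : ℂ) * (T k w j).1))
          + L (T k w) j)
        = T k (m k ν w) := by
  intro k hk w ν
  have hn0 : 0 < n := by omega
  have hnR : (0:ℝ) < n := by exact_mod_cast hn0
  have hnζ : (n:ℝ) * ζ = 2 * Real.pi := by rw [hζ]; field_simp
  have hnζC : (n:ℂ) * (ζ:ℂ) = 2 * (Real.pi : ℂ) := by exact_mod_cast hnζ
  set c : ℂ := ((Real.sqrt n : ℂ))⁻¹ with hc
  have hGmod : ∀ (v : ℂ × ℂ) (q : ℕ),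
      Complex.exp (Complex.I * (k:ℂ) * ((q % n : ℕ) : ℂ) * (ζ:ℂ)) •
          rot (((q % n : ℕ) : ℝ) * ζ) v
        = Complex.exp (Complex.I * (k:ℂ) * (q : ℂ) * (ζ:ℂ)) • rot ((q : ℝ) * ζ) v := by
    intro v
    exact modper' n hn0
      (fun q => Complex.exp (Complex.I * (k:ℂ) * (q : ℂ) * (ζ:ℂ)) • rot ((q : ℝ) * ζ) v)
      (by
        intro q
        show Complex.exp (Complex.I * (k:ℂ) * ((q + n : ℕ) : ℂ) * (ζ:ℂ)) •
            rot (((q + n : ℕ) : ℝ) * ζ) v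
          = Complex.exp (Complex.I * (k:ℂ) * (q : ℂ) * (ζ:ℂ)) • rot ((q : ℝ) * ζ) v
        have h2 : Complex.I * (k:ℂ) * ((q + n : ℕ) : ℂ) * (ζ:ℂ)
            = Complex.I * (k:ℂ) * (q:ℂ) * (ζ:ℂ) + (k:ℂ) * (2 * (Real.pi:ℂ) * Complex.I) := by
          push_cast
          linear_combination (Complex.I * (k:ℂ)) * hnζC
        have h1 : ((q + n : ℕ) : ℝ) * ζ = (q:ℝ) * ζ + 2 * Real.pi := by
          push_cast
          linear_combination hnζ
        rw [h2, Complex.exp_add, Complex.exp_nat_mul_two_pi_mul_I, mul_one, h1, hrot, hrot,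
          Real.cos_add_two_pi, Real.sin_add_two_pi])
  have hRmod : ∀ q : ℕ,
      (((Real.cos (((q % n : ℕ) : ℝ) * ζ) : ℝ) : ℂ), ((Real.sin (((q % n : ℕ) : ℝ) * ζ) : ℝ) : ℂ))
        = (((Real.cos ((q : ℝ) * ζ) : ℝ) : ℂ), ((Real.sin ((q : ℝ) * ζ) : ℝ) : ℂ)) := by
    exact modper' n hn0
      (fun q => (((Real.cos ((q : ℝ) * ζ) : ℝ) : ℂ), ((Real.sin ((q : ℝ) * ζ) : ℝ) : ℂ)))
      (by
        intro q
        have h1 : ((q + n : ℕ) : ℝ) * ζ = (q:ℝ) * ζ + 2 * Real.pi := by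
          push_cast
          linear_combination hnζ
        show (((Real.cos (((q + n : ℕ) : ℝ) * ζ) : ℝ) : ℂ), ((Real.sin (((q + n : ℕ) : ℝ) * ζ) : ℝ) : ℂ))
          = (((Real.cos ((q : ℝ) * ζ) : ℝ) : ℂ), ((Real.sin ((q : ℝ) * ζ) : ℝ) : ℂ))
        rw [h1, Real.cos_add_two_pi, Real.sin_add_two_pi])
  have hpz : ((Real.sin ζ : ℝ) : ℂ)^2 + ((Real.cos ζ : ℝ) : ℂ)^2 = 1 := by
    exact_mod_cast Real.sin_sq_add_cos_sq ζ
  have hpk : ((Real.sin ((k:ℝ) * ζ) : ℝ) : ℂ)^2 + ((Real.cos ((k:ℝ) * ζ) : ℝ) : ℂ)^2 = 1 := by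
    exact_mod_cast Real.sin_sq_add_cos_sq ((k:ℝ) * ζ)
  have key : L (T k w) = T k (B k w) := by
    funext j
    haveI : Fact (1 < n) := ⟨by omega⟩
    set p := (j - 1).val with hp
    have e1 : j = j - 1 + 1 := by ring
    have e2 : j + 1 = j - 1 + 2 := by ring
    have hv1 : (1 : ZMod n).val = 1 := ZMod.val_one n
    have hv2 : (2 : ZMod n).val = 2 := by
      rw [show (2 : ZMod n) = ((2:ℕ) : ZMod n) by norm_cast, ZMod.val_natCast,
        Nat.mod_eq_of_lt (by omega)]
    have hj : j.val = (p + 1) % n := by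
      conv_lhs => rw [e1]
      rw [ZMod.val_add, hv1, hp]
    have hj1 : (j + 1).val = (p + 2) % n := by
      conv_lhs => rw [e2]
      rw [ZMod.val_add, hv2, hp]
    have hx0 : T k w j = c • (Complex.exp (Complex.I * (k:ℂ) * ((p + 1 : ℕ) : ℂ) * (ζ:ℂ)) •
        rot (((p + 1 : ℕ) : ℝ) * ζ) w) := by
      rw [hT, hj, hGmod]
    have hx1 : T k w (j + 1) = c • (Complex.exp (Complex.I * (k:ℂ) * ((p + 2 : ℕ) : ℂ) * (ζ:ℂ)) •
        rot (((p + 2 : ℕ) : ℝ) * ζ) w) := by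
      rw [hT, hj1, hGmod]
    have hxm : T k w (j - 1) = c • (Complex.exp (Complex.I * (k:ℂ) * (p : ℂ) * (ζ:ℂ)) •
        rot ((p : ℝ) * ζ) w) := by
      rw [hT, hp]
    have haj : a j = (((Real.cos (((p + 1 : ℕ) : ℝ) * ζ) : ℝ) : ℂ),
        ((Real.sin (((p + 1 : ℕ) : ℝ) * ζ) : ℝ) : ℂ)) := by
      rw [ha, hj]
      exact hRmod (p + 1)
    have hRHS : T k (B k w) j = c • (Complex.exp (Complex.I * (k:ℂ) * ((p + 1 : ℕ) : ℂ) * (ζ:ℂ)) •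
        rot (((p + 1 : ℕ) : ℝ) * ζ) (B k w)) := by
      rw [hT, hj, hGmod]
    have hpθ : ((Real.sin (((p + 1 : ℕ) : ℝ) * ζ) : ℝ) : ℂ)^2
        + ((Real.cos (((p + 1 : ℕ) : ℝ) * ζ) : ℝ) : ℂ)^2 = 1 := by
      exact_mod_cast Real.sin_sq_add_cos_sq (((p + 1 : ℕ) : ℝ) * ζ)
    have hdot : dotc (a j) (T k w j)
        = c * Complex.exp (Complex.I * (k:ℂ) * ((p + 1 : ℕ) : ℂ) * (ζ:ℂ)) * w.1 := by
      rw [hdotc, haj, hx0, hrot]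
      simp only [Prod.smul_mk, smul_eq_mul, Prod.fst, Prod.snd]
      linear_combination (c * Complex.exp (Complex.I * (k:ℂ) * ((p + 1 : ℕ) : ℂ) * (ζ:ℂ)) * w.1) * hpθ
    have hE1 : Complex.exp (Complex.I * (k:ℂ) * ((p + 1 : ℕ) : ℂ) * (ζ:ℂ))
        = Complex.exp (Complex.I * (k:ℂ) * (p : ℂ) * (ζ:ℂ))
          * (((Real.cos ((k:ℝ) * ζ) : ℝ) : ℂ) + ((Real.sin ((k:ℝ) * ζ) : ℝ) : ℂ) * Complex.I) := by
      rw [show Complex.I * (k:ℂ) * ((p + 1 : ℕ) : ℂ) * (ζ:ℂ)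
          = Complex.I * (k:ℂ) * (p : ℂ) * (ζ:ℂ) + (((k:ℝ) * ζ : ℝ) : ℂ) * Complex.I by
        push_cast; ring]
      rw [Complex.exp_add, Complex.exp_mul_I, ← Complex.ofReal_cos, ← Complex.ofReal_sin]
    have hE2 : Complex.exp (Complex.I * (k:ℂ) * ((p + 2 : ℕ) : ℂ) * (ζ:ℂ))
        = Complex.exp (Complex.I * (k:ℂ) * (p : ℂ) * (ζ:ℂ))
          * (((Real.cos ((k:ℝ) * ζ) : ℝ) : ℂ) + ((Real.sin ((k:ℝ) * ζ) : ℝ) : ℂ) * Complex.I)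
          * (((Real.cos ((k:ℝ) * ζ) : ℝ) : ℂ) + ((Real.sin ((k:ℝ) * ζ) : ℝ) : ℂ) * Complex.I) := by
      rw [show Complex.I * (k:ℂ) * ((p + 2 : ℕ) : ℂ) * (ζ:ℂ)
          = Complex.I * (k:ℂ) * (p : ℂ) * (ζ:ℂ) + (((k:ℝ) * ζ : ℝ) : ℂ) * Complex.I
            + (((k:ℝ) * ζ : ℝ) : ℂ) * Complex.I by
        push_cast; ring]
      rw [Complex.exp_add, Complex.exp_add, Complex.exp_mul_I, ← Complex.ofReal_cos,
        ← Complex.ofReal_sin]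
    have hc1 : Real.cos (((p + 1 : ℕ) : ℝ) * ζ)
        = Real.cos ((p:ℝ) * ζ) * Real.cos ζ - Real.sin ((p:ℝ) * ζ) * Real.sin ζ := by
      rw [show ((p + 1 : ℕ) : ℝ) * ζ = (p:ℝ) * ζ + ζ by push_cast; ring, Real.cos_add]
    have hs1 : Real.sin (((p + 1 : ℕ) : ℝ) * ζ)
        = Real.sin ((p:ℝ) * ζ) * Real.cos ζ + Real.cos ((p:ℝ) * ζ) * Real.sin ζ := by
      rw [show ((p + 1 : ℕ) : ℝ) * ζ = (p:ℝ) * ζ + ζ by push_cast; ring, Real.sin_add]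
    have hc2 : Real.cos (((p + 2 : ℕ) : ℝ) * ζ)
        = Real.cos ((p:ℝ) * ζ) * (Real.cos ζ * Real.cos ζ - Real.sin ζ * Real.sin ζ)
          - Real.sin ((p:ℝ) * ζ) * (Real.sin ζ * Real.cos ζ + Real.cos ζ * Real.sin ζ) := by
      rw [show ((p + 2 : ℕ) : ℝ) * ζ = ((p:ℝ) * ζ + ζ) + ζ by push_cast; ring, Real.cos_add,
        Real.cos_add, Real.sin_add]
      ring
    have hs2 : Real.sin (((p + 2 : ℕ) : ℝ) * ζ)
        = Real.sin ((p:ℝ) * ζ) * (Real.cos ζ * Real.cos ζ - Real.sin ζ * Real.sin ζ)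
          + Real.cos ((p:ℝ) * ζ) * (Real.sin ζ * Real.cos ζ + Real.cos ζ * Real.sin ζ) := by
      rw [show ((p + 2 : ℕ) : ℝ) * ζ = ((p:ℝ) * ζ + ζ) + ζ by push_cast; ring, Real.sin_add,
        Real.cos_add, Real.sin_add]
      ring
    rw [hL, hdot, hx0, hx1, hxm, haj, hRHS, hB]
    simp only [hrot, hE1, hE2, hc1, hs1, hc2, hs2]
    rw [hα, hγ, hω, sinsqhalf ζ, sinsqhalf ((k:ℝ) * ζ)]
    simp only [Complex.ofReal_add, Complex.ofReal_sub, Complex.ofReal_neg, Complex.ofReal_mul,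
      Complex.ofReal_div, Complex.ofReal_pow, Complex.ofReal_one, Complex.ofReal_ofNat,
      Complex.ofReal_natCast]
    simp only [Prod.smul_mk, smul_eq_mul, Prod.mk_add_mk, Prod.mk_sub_mk, Prod.mk.injEq]
    constructor
    · linear_combination
        (c * Complex.exp (Complex.I * (k:ℂ) * (p : ℂ) * (ζ:ℂ))
          * (((Real.cos ((p:ℝ) * ζ) : ℝ) : ℂ) * w.1 - ((Real.sin ((p:ℝ) * ζ) : ℝ) : ℂ) * w.2)
          * (((Real.cos ζ : ℝ) : ℂ)^2 + ((Real.sin ζ : ℝ) : ℂ)^2) * Complex.I^2) * hpk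
        + (c * Complex.exp (Complex.I * (k:ℂ) * (p : ℂ) * (ζ:ℂ))
          * (((Real.sin ((p:ℝ) * ζ) : ℝ) : ℂ) * w.2 - ((Real.cos ((p:ℝ) * ζ) : ℝ) : ℂ) * w.1)) * hpz
        + (c * Complex.exp (Complex.I * (k:ℂ) * (p : ℂ) * (ζ:ℂ))
          * (((Real.cos ζ : ℝ) : ℂ)^2 + ((Real.sin ζ : ℝ) : ℂ)^2)
          * (1 - ((Real.cos ((k:ℝ) * ζ) : ℝ) : ℂ)^2)
          * (((Real.cos ((p:ℝ) * ζ) : ℝ) : ℂ) * w.1 - ((Real.sin ((p:ℝ) * ζ) : ℝ) : ℂ) * w.2))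
          * Complex.I_sq
    · linear_combination
        (c * Complex.exp (Complex.I * (k:ℂ) * (p : ℂ) * (ζ:ℂ))
          * (((Real.sin ((p:ℝ) * ζ) : ℝ) : ℂ) * w.1 + ((Real.cos ((p:ℝ) * ζ) : ℝ) : ℂ) * w.2)
          * (((Real.cos ζ : ℝ) : ℂ)^2 + ((Real.sin ζ : ℝ) : ℂ)^2) * Complex.I^2) * hpk
        + (-(c * Complex.exp (Complex.I * (k:ℂ) * (p : ℂ) * (ζ:ℂ))
          * (((Real.sin ((p:ℝ) * ζ) : ℝ) : ℂ) * w.1 + ((Real.cos ((p:ℝ) * ζ) : ℝ) : ℂ) * w.2))) * hpz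
        + (c * Complex.exp (Complex.I * (k:ℂ) * (p : ℂ) * (ζ:ℂ))
          * (((Real.cos ζ : ℝ) : ℂ)^2 + ((Real.sin ζ : ℝ) : ℂ)^2)
          * (1 - ((Real.cos ((k:ℝ) * ζ) : ℝ) : ℂ)^2)
          * (((Real.sin ((p:ℝ) * ζ) : ℝ) : ℂ) * w.1 + ((Real.cos ((p:ℝ) * ζ) : ℝ) : ℂ) * w.2))
          * Complex.I_sq
  refine ⟨key, ?_⟩
  funext j
  show (Complex.I * (ν : ℂ) * (T k w j).2, -(Complex.I * (ν : ℂ) * (T k w j).1)) + L (T k w) j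
      = T k (m k ν w) j
  rw [key, hm, hT, hT, hT]
  simp only [hrot, Prod.smul_mk, smul_eq_mul, Prod.fst_add, Prod.snd_add, Prod.mk_add_mk,
    Prod.mk.injEq]
  constructor <;> ring
end

section
/- Let n = 4. Then α_k = 0 for every k ∈ {1,2,3,4}, det m_k(ν) = −(γ_k − ν)² for all ν ∈ ℝ, and for every ν ≠ γ_k the Morse index satisfies n_k(ν) = 1; in particular the Morse index does not jump across ν = γ_k, i.e. n_k(γ_k − ρ) = n_k(γ_k + ρ) for all ρ > 0. -/
/-- Let `n = 4` (so `ζ = 2π/4`), `α_k = 4 cos ζ sin²(kζ/2)`, `γ_k = 2 sin(kζ) sin ζ`,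
`h` differentiable, `μ > 0`, and let `B_k`, `m_k(ν)` be the Hermitian matrices of the text,
with Morse index `n_k(ν)` the number of negative eigenvalues of `m_k(ν)` with multiplicity.
Then `α_k = 0` for every `k ∈ {1,2,3,4}`, `det m_k(ν) = −(γ_k − ν)²` for all `ν`, for
every `ν ≠ γ_k` the Morse index satisfies `n_k(ν) = 1`, and the Morse index does not jump
across `ν = γ_k`: `n_k(γ_k − ρ) = n_k(γ_k + ρ)` for all `ρ > 0`. -/
theorem stmt_8 (ζ : ℝ) (hζ : ζ = 2 * Real.pi / 4)
    (α γ : ℕ → ℝ)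
    (hα : ∀ k : ℕ, α k = 4 * Real.cos ζ * Real.sin (k * ζ / 2) ^ 2)
    (hγ : ∀ k : ℕ, γ k = 2 * Real.sin (k * ζ) * Real.sin ζ)
    (h : ℝ → ℝ) (hdiff : Differentiable ℝ h) (μ : ℝ) (hμ : 0 < μ)
    (B : ℕ → Matrix (Fin 2) (Fin 2) ℂ)
    (hB : ∀ k : ℕ, B k =
      !![((-(α k) + 2 * μ ^ 2 * deriv h (μ ^ 2) : ℝ) : ℂ), -(Complex.I * (γ k : ℂ));
         Complex.I * (γ k : ℂ), ((-(α k) : ℝ) : ℂ)])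
    (m : ℕ → ℝ → Matrix (Fin 2) (Fin 2) ℂ)
    (hm : ∀ (k : ℕ) (ν : ℝ), m k ν = B k + !![0, Complex.I * (ν : ℂ);
                                              -(Complex.I * (ν : ℂ)), 0])
    (hH : ∀ (k : ℕ) (ν : ℝ), (m k ν).IsHermitian)
    (morse : ℕ → ℝ → ℕ)
    (hmorse : ∀ (k : ℕ) (ν : ℝ),
      morse k ν = (Finset.univ.filter fun i : Fin 2 => (hH k ν).eigenvalues i < 0).card) :
    ∀ k ∈ Finset.Icc 1 4,
      α k = 0 ∧
      (∀ ν : ℝ, (m k ν).det = ((-(γ k - ν) ^ 2 : ℝ) : ℂ)) ∧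
      (∀ ν : ℝ, ν ≠ γ k → morse k ν = 1) ∧
      (∀ ρ : ℝ, 0 < ρ → morse k (γ k - ρ) = morse k (γ k + ρ)) := by

  have hcos : Real.cos ζ = 0 := by
    rw [hζ]; norm_num [show (2:ℝ) * Real.pi / 4 = Real.pi / 2 by ring, Real.cos_pi_div_two]
  intro k hk
  have hαk : α k = 0 := by rw [hα k, hcos]; ring
  have hdet : ∀ ν : ℝ, (m k ν).det = ((-(γ k - ν) ^ 2 : ℝ) : ℂ) := by
    intro ν
    rw [hm k ν, hB k, hαk]
    simp [Matrix.det_fin_two, Matrix.add_apply]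
    push_cast
    ring_nf
    simp [Complex.I_sq]
  have hone : ∀ ν : ℝ, ν ≠ γ k → morse k ν = 1 := by
    intro ν hν
    have hprod : (hH k ν).eigenvalues 0 * (hH k ν).eigenvalues 1 = -(γ k - ν) ^ 2 := by
      have h2 := (hH k ν).det_eq_prod_eigenvalues
      rw [hdet ν, Fin.prod_univ_two] at h2
      have h3 : (RCLike.ofReal ((hH k ν).eigenvalues 0 * (hH k ν).eigenvalues 1) : ℂ) = RCLike.ofReal (-(γ k - ν) ^ 2) := by
        push_cast
        rw [← h2]
        push_cast
        ring_nf
        rfl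
      exact RCLike.ofReal_inj.mp h3
    set e := (hH k ν).eigenvalues with he
    have hneg : e 0 * e 1 < 0 := by
      rw [hprod]
      have hne : γ k - ν ≠ 0 := sub_ne_zero.mpr (fun hh => hν hh.symm)
      have : 0 < (γ k - ν) ^ 2 := by positivity
      linarith
    rw [hmorse k ν]
    rcases lt_or_ge (e 0) 0 with h0 | h0
    · have h1 : ¬ e 1 < 0 := by nlinarith
      have : (Finset.univ.filter fun i : Fin 2 => e i < 0) = {0} := by
        ext i; fin_cases i <;> simp [h0, h1]
      rw [this]; simp
    · have h0' : ¬ e 0 < 0 := not_lt.mpr h0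
      have h1 : e 1 < 0 := by nlinarith
      have : (Finset.univ.filter fun i : Fin 2 => e i < 0) = {1} := by
        ext i; fin_cases i <;> simp [h0', h1]
      rw [this]; simp
  exact ⟨hαk, hdet, hone, fun ρ hρ => by
    rw [hone _ (by intro hh; linarith), hone _ (by intro hh; linarith)]⟩
end

section
/- Let n ≥ 5. Then for every k ∈ {1,…,n−1}: α_k > 0 and δ_k ≤ α_k/2; moreover α_1 ≤ α_k for all k ∈ {1,…,n−1}, and the sequence k ↦ α_k is strictly increasing on {1,…,⌊n/2⌋}. -/
/-- Let `n ≥ 5`, `ζ = 2π/n`, `α_k = 4 cos ζ sin²(kζ/2)`, `γ_k = 2 sin(kζ) sin ζ`, and (when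
`α_k ≠ 0`) `δ_k = (α_k² − γ_k²)/(2α_k)`.  Then for every `k ∈ {1,…,n−1}`: `α_k > 0` and
`δ_k ≤ α_k/2`; moreover `α_1 ≤ α_k` for all `k ∈ {1,…,n−1}`, and `k ↦ α_k` is strictly
increasing on `{1,…,⌊n/2⌋}`. -/
theorem stmt_11 (n : ℕ) (hn : 5 ≤ n) (ζ : ℝ) (hζ : ζ = 2 * Real.pi / n)
    (α γ δ : ℕ → ℝ)
    (hα : ∀ k : ℕ, α k = 4 * Real.cos ζ * Real.sin (k * ζ / 2) ^ 2)
    (hγ : ∀ k : ℕ, γ k = 2 * Real.sin (k * ζ) * Real.sin ζ)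
    (hδ : ∀ k : ℕ, δ k = ((α k) ^ 2 - (γ k) ^ 2) / (2 * α k)) :
    (∀ k ∈ Finset.Icc 1 (n - 1), 0 < α k ∧ δ k ≤ α k / 2 ∧ α 1 ≤ α k) ∧
    (∀ k l : ℕ, 1 ≤ k → k < l → l ≤ n / 2 → α k < α l) := by
  have hπ := Real.pi_pos
  have hn5 : (5:ℝ) ≤ n := by exact_mod_cast hn
  have hn0 : (0:ℝ) < n := by linarith
  have hζpos : 0 < ζ := by rw [hζ]; positivity
  have hnζ : (n:ℝ) * ζ = 2 * Real.pi := by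
    rw [hζ]; field_simp
  have hζlt : ζ < Real.pi / 2 := by
    rw [hζ, div_lt_iff₀ hn0]; nlinarith
  have hcos : 0 < Real.cos ζ := Real.cos_pos_of_mem_Ioo ⟨by linarith, hζlt⟩
  have mono : ∀ x y : ℝ, 0 ≤ y → y ≤ x → x ≤ Real.pi - y → Real.sin y ≤ Real.sin x := by
    intro x y hy hyx hx
    rcases le_or_gt x (Real.pi/2) with h | h
    · exact Real.strictMonoOn_sin.monotoneOn ⟨by linarith, by linarith⟩ ⟨by linarith, h⟩ hyx
    · rw [← Real.sin_pi_sub x]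
      exact Real.strictMonoOn_sin.monotoneOn ⟨by linarith, by linarith⟩
        ⟨by linarith, by linarith⟩ (by linarith)
  constructor
  · intro k hk
    simp only [Finset.mem_Icc] at hk
    obtain ⟨hk1, hk2⟩ := hk
    have hkr1 : (1:ℝ) ≤ k := by exact_mod_cast hk1
    have hkr2 : (k:ℝ) ≤ (n:ℝ) - 1 := by
      have h' : (k:ℝ) ≤ ((n-1:ℕ):ℝ) := by exact_mod_cast hk2
      rw [Nat.cast_sub (by omega)] at h'; simpa using h'
    have hkζ : (k:ℝ) * ζ ≤ 2 * Real.pi - ζ := by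
      nlinarith [mul_le_mul_of_nonneg_right hkr2 hζpos.le]
    have hs1 : Real.sin (ζ/2) ≤ Real.sin ((k:ℝ)*ζ/2) := by
      apply mono _ _ (by positivity) (by nlinarith)
      linarith
    have hspos : 0 < Real.sin (ζ/2) :=
      Real.sin_pos_of_pos_of_lt_pi (by positivity) (by linarith)
    have hskpos : 0 < Real.sin ((k:ℝ)*ζ/2) := lt_of_lt_of_le hspos hs1
    have hαpos : 0 < α k := by
      rw [hα]; positivity
    refine ⟨hαpos, ?_, ?_⟩
    · rw [hδ, div_le_iff₀ (by linarith)]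
      nlinarith [sq_nonneg (γ k)]
    · rw [hα 1, hα k]
      push_cast
      have hsq : Real.sin (1*ζ/2) ^ 2 ≤ Real.sin ((k:ℝ)*ζ/2) ^ 2 := by
        rw [one_mul]
        exact pow_le_pow_left₀ hspos.le hs1 2
      nlinarith
  · intro k l hk hkl hl
    have h2l : 2 * l ≤ n := by omega
    have hlr : (2:ℝ) * l ≤ n := by exact_mod_cast h2l
    have hkr : (1:ℝ) ≤ k := by exact_mod_cast hk
    have hklr : (k:ℝ) < l := by exact_mod_cast hkl
    have hx : (l:ℝ)*ζ/2 ≤ Real.pi/2 := by nlinarith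
    have hkl2 : (k:ℝ)*ζ/2 < (l:ℝ)*ζ/2 := by
      have := mul_lt_mul_of_pos_right hklr hζpos
      linarith
    have hkpos : 0 < (k:ℝ)*ζ/2 := by positivity
    have hss : Real.sin ((k:ℝ)*ζ/2) < Real.sin ((l:ℝ)*ζ/2) := by
      apply Real.strictMonoOn_sin ⟨by linarith, by linarith⟩ ⟨by linarith, hx⟩ hkl2
    have hsk : 0 < Real.sin ((k:ℝ)*ζ/2) :=
      Real.sin_pos_of_pos_of_lt_pi hkpos (by linarith)
    rw [hα k, hα l]
    have hsq : Real.sin ((k:ℝ)*ζ/2) ^ 2 < Real.sin ((l:ℝ)*ζ/2) ^ 2 :=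
      pow_lt_pow_left₀ hss hsk.le (by norm_num)
    have h4 : (0:ℝ) < 4 * Real.cos ζ := by linarith
    exact mul_lt_mul_of_pos_left hsq h4
end

section
/- Let n ≥ 5, k ∈ {1,…,n−1}, and suppose μ²h′(μ²) < α_k/2. Then ν_− < ν_+ are real, and the Morse index satisfies n_k(ν) = 2 for every ν ∈ (ν_−, ν_+) and n_k(ν) = 1 for every ν < ν_− and every ν > ν_+; in particular m_k(ν) is invertible for all ν ∉ {ν_−, ν_+}, and the jump of the Morse index at ν_± is η_k(ν_±) = ±σ where σ = sgn(h′(μ²)). -/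
set_option maxHeartbeats 1600000 in
/-- Let `n ≥ 5`, `ζ = 2π/n`, `α_k = 4 cos ζ sin²(kζ/2)`, `γ_k = 2 sin(kζ) sin ζ`,
`h` differentiable, `μ > 0`, and let `B_k`, `m_k(ν)` be the Hermitian matrices of the
text, with Morse index `n_k(ν)` the number of negative eigenvalues of `m_k(ν)` with
multiplicity, `σ = sgn(h′(μ²))`, and `ν_± = γ_k ± √(α_k(α_k − 2μ²h′(μ²)))`.
Let `k ∈ {1,…,n−1}` and suppose `μ²h′(μ²) < α_k/2`.  Then `ν_− < ν_+` (and both are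
real), the Morse index satisfies `n_k(ν) = 2` on `(ν_−, ν_+)` and `n_k(ν) = 1` for
`ν < ν_−` and for `ν > ν_+`; in particular `m_k(ν)` is invertible for `ν ∉ {ν_−, ν_+}`,
and the jumps of the Morse index are `η_k(ν_−) = −σ` and `η_k(ν_+) = σ`, where
`η_k(ν₀) = σ(n_k(ν₀ − ρ) − n_k(ν₀ + ρ))` for all sufficiently small `ρ > 0`. -/
theorem stmt_12 (n : ℕ) (hn : 5 ≤ n) (ζ : ℝ) (hζ : ζ = 2 * Real.pi / n)
    (α γ : ℕ → ℝ)
    (hα : ∀ k : ℕ, α k = 4 * Real.cos ζ * Real.sin (k * ζ / 2) ^ 2)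
    (hγ : ∀ k : ℕ, γ k = 2 * Real.sin (k * ζ) * Real.sin ζ)
    (h : ℝ → ℝ) (hdiff : Differentiable ℝ h) (μ : ℝ) (hμ : 0 < μ)
    (B : ℕ → Matrix (Fin 2) (Fin 2) ℂ)
    (hB : ∀ k : ℕ, B k =
      !![((-(α k) + 2 * μ ^ 2 * deriv h (μ ^ 2) : ℝ) : ℂ), -(Complex.I * (γ k : ℂ));
         Complex.I * (γ k : ℂ), ((-(α k) : ℝ) : ℂ)])
    (m : ℕ → ℝ → Matrix (Fin 2) (Fin 2) ℂ)
    (hm : ∀ (k : ℕ) (ν : ℝ), m k ν = B k + !![0, Complex.I * (ν : ℂ);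
                                              -(Complex.I * (ν : ℂ)), 0])
    (hH : ∀ (k : ℕ) (ν : ℝ), (m k ν).IsHermitian)
    (morse : ℕ → ℝ → ℕ)
    (hmorse : ∀ (k : ℕ) (ν : ℝ),
      morse k ν = (Finset.univ.filter fun i : Fin 2 => (hH k ν).eigenvalues i < 0).card)
    (σ : ℝ) (hσ : σ = Real.sign (deriv h (μ ^ 2)))
    (k : ℕ) (hk : k ∈ Finset.Icc 1 (n - 1))
    (hcond : μ ^ 2 * deriv h (μ ^ 2) < α k / 2)
    (νm νp : ℝ)
    (hνm : νm = γ k - Real.sqrt (α k * (α k - 2 * μ ^ 2 * deriv h (μ ^ 2))))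
    (hνp : νp = γ k + Real.sqrt (α k * (α k - 2 * μ ^ 2 * deriv h (μ ^ 2)))) :
    νm < νp ∧
    (∀ ν : ℝ, νm < ν → ν < νp → morse k ν = 2) ∧
    (∀ ν : ℝ, ν < νm → morse k ν = 1) ∧
    (∀ ν : ℝ, νp < ν → morse k ν = 1) ∧
    (∀ ν : ℝ, ν ≠ νm → ν ≠ νp → IsUnit (m k ν)) ∧
    (∃ ρ₀ > 0, ∀ ρ : ℝ, 0 < ρ → ρ < ρ₀ →
      σ * ((morse k (νm - ρ) : ℝ) - (morse k (νm + ρ) : ℝ)) = -σ ∧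
      σ * ((morse k (νp - ρ) : ℝ) - (morse k (νp + ρ) : ℝ)) = σ) := by
  have hk1 : 1 ≤ k := (Finset.mem_Icc.1 hk).1
  have hkn : k < n := by have := (Finset.mem_Icc.1 hk).2; omega
  have hπ := Real.pi_pos
  have hn5 : (5:ℝ) ≤ n := by exact_mod_cast hn
  have hnpos : (0:ℝ) < n := by linarith
  have hζpos : 0 < ζ := by rw [hζ]; positivity
  have hζlt : ζ < Real.pi / 2 := by
    rw [hζ, div_lt_iff₀ hnpos]; nlinarith
  have hcos : 0 < Real.cos ζ := Real.cos_pos_of_mem_Ioo ⟨by linarith, hζlt⟩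
  have hk1' : (1:ℝ) ≤ k := by exact_mod_cast hk1
  have hkn' : (k:ℝ) < n := by exact_mod_cast hkn
  have hkz : (k:ℝ) * ζ / 2 = k * Real.pi / n := by rw [hζ]; ring
  have hsinpos : 0 < Real.sin ((k:ℝ) * ζ / 2) := by
    rw [hkz]
    apply Real.sin_pos_of_pos_of_lt_pi
    · have : 0 < (k:ℝ) := by linarith
      positivity
    · rw [div_lt_iff₀ hnpos]; nlinarith
  have hApos : 0 < α k := by
    rw [hα]
    have := pow_pos hsinpos 2
    positivity
  set T := 2 * μ ^ 2 * deriv h (μ ^ 2) with hT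
  have hTA : T < α k := by rw [hT]; linarith
  have hDpos : 0 < α k * (α k - T) := mul_pos hApos (by linarith)
  set s := Real.sqrt (α k * (α k - T)) with hsdef
  have hspos : 0 < s := Real.sqrt_pos.2 hDpos
  have hs2 : s ^ 2 = α k * (α k - T) := Real.sq_sqrt hDpos.le
  have hdet : ∀ ν : ℝ, (m k ν).det = ((α k * (α k - T) - (ν - γ k) ^ 2 : ℝ) : ℂ) := by
    intro ν
    rw [hm, hB]
    simp [Matrix.det_fin_two, Matrix.add_apply]
    ring_nf
    rw [Complex.I_sq]
    push_cast
    ring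
  have key : ∀ ν : ℝ,
      (hH k ν).eigenvalues 0 * (hH k ν).eigenvalues 1 = α k * (α k - T) - (ν - γ k) ^ 2 ∧
      (hH k ν).eigenvalues 0 + (hH k ν).eigenvalues 1 = -2 * α k + T := by
    intro ν
    have hdet2 : (m k ν).det =
        (((hH k ν).eigenvalues 0 : ℂ)) * (((hH k ν).eigenvalues 1 : ℂ)) := by
      rw [(hH k ν).det_eq_prod_eigenvalues, Fin.prod_univ_two]
      norm_num
    have htr : (m k ν).trace = ((-2 * α k + T : ℝ) : ℂ) := by
      rw [hm, hB]; simp [Matrix.trace_fin_two]; push_cast; ring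
    have htr2 : (m k ν).trace = ∑ i, ((hH k ν).eigenvalues i : ℂ) := by
      conv_lhs => rw [(hH k ν).spectral_theorem]
      rw [Unitary.conjStarAlgAut_apply, Matrix.trace_mul_comm, ← Matrix.mul_assoc, Unitary.coe_star_mul_self,
        Matrix.one_mul, Matrix.trace_diagonal]
      simp
    constructor
    · have h1 := (hdet2.symm.trans (hdet ν))
      rw [← Complex.ofReal_mul] at h1
      exact Complex.ofReal_inj.1 h1
    · have h2 := htr2.symm.trans htr
      rw [Fin.sum_univ_two] at h2
      exact_mod_cast h2
  have hcard : ∀ ν : ℝ, morse k ν =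
      (if (hH k ν).eigenvalues 0 < 0 then 1 else 0) +
      (if (hH k ν).eigenvalues 1 < 0 then 1 else 0) := by
    intro ν; rw [hmorse, Finset.card_filter, Fin.sum_univ_two]
  have hνm' : νm = γ k - s := hνm
  have hνp' : νp = γ k + s := hνp
  have hlt : νm < νp := by rw [hνm', hνp']; linarith
  -- morse = 2 inside
  have morse2 : ∀ ν : ℝ, νm < ν → ν < νp → morse k ν = 2 := by
    intro ν h1 h2
    obtain ⟨hp, ht⟩ := key ν
    rw [hνm'] at h1; rw [hνp'] at h2
    have hprod : 0 < (hH k ν).eigenvalues 0 * (hH k ν).eigenvalues 1 := by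
      rw [hp, ← hs2]; nlinarith
    have hsum : (hH k ν).eigenvalues 0 + (hH k ν).eigenvalues 1 < 0 := by
      rw [ht]; linarith
    rcases mul_pos_iff.1 hprod with ⟨ha, hb⟩ | ⟨ha, hb⟩
    · linarith
    · rw [hcard, if_pos ha, if_pos hb]
  -- morse = 1 when product < 0
  have morse1 : ∀ ν : ℝ,
      (hH k ν).eigenvalues 0 * (hH k ν).eigenvalues 1 < 0 → morse k ν = 1 := by
    intro ν hprod
    rw [hcard]
    rcases mul_neg_iff.1 hprod with ⟨ha, hb⟩ | ⟨ha, hb⟩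
    · rw [if_neg (by linarith), if_pos hb]
    · rw [if_pos ha, if_neg (by linarith)]
  have morseL : ∀ ν : ℝ, ν < νm → morse k ν = 1 := by
    intro ν h1
    obtain ⟨hp, _⟩ := key ν
    rw [hνm'] at h1
    exact morse1 ν (by rw [hp, ← hs2]; nlinarith)
  have morseR : ∀ ν : ℝ, νp < ν → morse k ν = 1 := by
    intro ν h1
    obtain ⟨hp, _⟩ := key ν
    rw [hνp'] at h1
    exact morse1 ν (by rw [hp, ← hs2]; nlinarith)
  refine ⟨hlt, morse2, morseL, morseR, ?_, ?_⟩
  · intro ν hne1 hne2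
    apply (Matrix.isUnit_iff_isUnit_det _).2
    rw [hdet ν]
    refine isUnit_iff_ne_zero.2 (Complex.ofReal_ne_zero.2 ?_)
    intro hc
    have hfac : (ν - γ k - s) * (ν - γ k + s) = 0 := by
      have h2 : (ν - γ k) ^ 2 = s ^ 2 := by rw [hs2]; linarith
      linear_combination h2
    rcases mul_eq_zero.1 hfac with hz | hz
    · exact hne2 (by rw [hνp']; linarith)
    · exact hne1 (by rw [hνm']; linarith)
  · refine ⟨νp - νm, by linarith, fun ρ hρ1 hρ2 => ?_⟩
    have h1 : morse k (νm - ρ) = 1 := morseL _ (by linarith)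
    have h2 : morse k (νm + ρ) = 2 := morse2 _ (by linarith) (by linarith)
    have h3 : morse k (νp - ρ) = 2 := morse2 _ (by linarith) (by linarith)
    have h4 : morse k (νp + ρ) = 1 := morseR _ (by linarith)
    rw [h1, h2, h3, h4]
    norm_num
end

section
/- Let n ≥ 5 and k ∈ {1,…,n−1}. If μ²h′(μ²) < δ_k, then ν_− < 0 < ν_+. -/
/-- Let `n ≥ 5`, `ζ = 2π/n`, `α_k = 4 cos ζ sin²(kζ/2)`, `γ_k = 2 sin(kζ) sin ζ`,
`δ_k = (α_k² − γ_k²)/(2α_k)`, `h` differentiable, `μ > 0`, and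
`ν_± = γ_k ± √(α_k(α_k − 2μ²h′(μ²)))`.  For `k ∈ {1,…,n−1}`: if `μ²h′(μ²) < δ_k`, then
`ν_− < 0 < ν_+`. -/
theorem stmt_13 (n : ℕ) (hn : 5 ≤ n) (ζ : ℝ) (hζ : ζ = 2 * Real.pi / n)
    (α γ δ : ℕ → ℝ)
    (hα : ∀ k : ℕ, α k = 4 * Real.cos ζ * Real.sin (k * ζ / 2) ^ 2)
    (hγ : ∀ k : ℕ, γ k = 2 * Real.sin (k * ζ) * Real.sin ζ)
    (hδ : ∀ k : ℕ, δ k = ((α k) ^ 2 - (γ k) ^ 2) / (2 * α k))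
    (h : ℝ → ℝ) (hdiff : Differentiable ℝ h) (μ : ℝ) (hμ : 0 < μ)
    (k : ℕ) (hk : k ∈ Finset.Icc 1 (n - 1))
    (hcond : μ ^ 2 * deriv h (μ ^ 2) < δ k)
    (νm νp : ℝ)
    (hνm : νm = γ k - Real.sqrt (α k * (α k - 2 * μ ^ 2 * deriv h (μ ^ 2))))
    (hνp : νp = γ k + Real.sqrt (α k * (α k - 2 * μ ^ 2 * deriv h (μ ^ 2)))) :
    νm < 0 ∧ 0 < νp := by
  have hπ := Real.pi_pos
  simp only [Finset.mem_Icc] at hk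
  obtain ⟨hk1, hk2⟩ := hk
  have hn0 : (0 : ℝ) < n := by positivity
  have hn5 : (5 : ℝ) ≤ n := by exact_mod_cast hn
  -- ζ bounds
  have hζpos : 0 < ζ := by rw [hζ]; positivity
  have hζlt : ζ < Real.pi / 2 := by
    rw [hζ, div_lt_div_iff₀ hn0 (by norm_num)]
    nlinarith
  have hcos : 0 < Real.cos ζ :=
    Real.cos_pos_of_mem_Ioo ⟨by linarith, hζlt⟩
  have hkn : (k : ℝ) < n := by
    have : k ≤ n - 1 := hk2
    have : k < n := by omega
    exact_mod_cast this
  have hkpos : (1 : ℝ) ≤ k := by exact_mod_cast hk1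
  have hsin : 0 < Real.sin ((k : ℝ) * ζ / 2) := by
    apply Real.sin_pos_of_pos_of_lt_pi
    · positivity
    · have heq : (k : ℝ) * ζ / 2 = k * Real.pi / n := by rw [hζ]; ring
      rw [heq, div_lt_iff₀ hn0]
      nlinarith
  have ha : 0 < α k := by rw [hα]; positivity
  set a := α k
  set g := γ k
  have hδ' : δ k = (a ^ 2 - g ^ 2) / (2 * a) := hδ k
  have hA : g ^ 2 < a * (a - 2 * μ ^ 2 * deriv h (μ ^ 2)) := by
    rw [hδ', lt_div_iff₀ (by linarith)] at hcond
    nlinarith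
  have hs : |g| < Real.sqrt (a * (a - 2 * μ ^ 2 * deriv h (μ ^ 2))) := by
    rw [← Real.sqrt_sq_eq_abs]
    exact Real.sqrt_lt_sqrt (sq_nonneg g) hA
  have h1 := abs_lt.mp hs
  constructor
  · rw [hνm]; linarith [h1.2]
  · rw [hνp]; linarith [h1.1]
end

section
/- Let n ≥ 5 and k ∈ {1,…,⌊n/2⌋}. If δ_k < μ²h′(μ²) < α_k/2, then both ν_− and ν_+ are positive: 0 < ν_− < ν_+. -/
/-- Let `n ≥ 5`, `ζ = 2π/n`, `α_k = 4 cos ζ sin²(kζ/2)`, `γ_k = 2 sin(kζ) sin ζ`,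
`δ_k = (α_k² − γ_k²)/(2α_k)`, `h` differentiable, `μ > 0`, and
`ν_± = γ_k ± √(α_k(α_k − 2μ²h′(μ²)))`.  For `k ∈ {1,…,⌊n/2⌋}`: if
`δ_k < μ²h′(μ²) < α_k/2`, then both `ν_−` and `ν_+` are positive, `0 < ν_− < ν_+`. -/
theorem stmt_14 (n : ℕ) (hn : 5 ≤ n) (ζ : ℝ) (hζ : ζ = 2 * Real.pi / n)
    (α γ δ : ℕ → ℝ)
    (hα : ∀ k : ℕ, α k = 4 * Real.cos ζ * Real.sin (k * ζ / 2) ^ 2)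
    (hγ : ∀ k : ℕ, γ k = 2 * Real.sin (k * ζ) * Real.sin ζ)
    (hδ : ∀ k : ℕ, δ k = ((α k) ^ 2 - (γ k) ^ 2) / (2 * α k))
    (h : ℝ → ℝ) (hdiff : Differentiable ℝ h) (μ : ℝ) (hμ : 0 < μ)
    (k : ℕ) (hk : k ∈ Finset.Icc 1 (n / 2))
    (hcond₁ : δ k < μ ^ 2 * deriv h (μ ^ 2))
    (hcond₂ : μ ^ 2 * deriv h (μ ^ 2) < α k / 2)
    (νm νp : ℝ)
    (hνm : νm = γ k - Real.sqrt (α k * (α k - 2 * μ ^ 2 * deriv h (μ ^ 2))))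
    (hνp : νp = γ k + Real.sqrt (α k * (α k - 2 * μ ^ 2 * deriv h (μ ^ 2)))) :
    0 < νm ∧ νm < νp := by
  have hπ := Real.pi_pos
  simp only [Finset.mem_Icc] at hk
  obtain ⟨hk1, hk2⟩ := hk
  have h2k : 2 * k ≤ n := by omega
  have hn' : (5 : ℝ) ≤ n := by exact_mod_cast hn
  have hnpos : (0 : ℝ) < n := by linarith
  have hζpos : 0 < ζ := by rw [hζ]; positivity
  have hk1' : (1 : ℝ) ≤ k := by exact_mod_cast hk1
  have h2k' : (2 : ℝ) * k ≤ n := by exact_mod_cast h2k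
  -- ζ < π/2
  have hζlt : ζ < Real.pi / 2 := by
    rw [hζ, div_lt_iff₀ hnpos]; nlinarith
  -- k * ζ ≤ π
  have hkζle : (k : ℝ) * ζ ≤ Real.pi := by
    rw [hζ]
    rw [mul_div_assoc', div_le_iff₀ hnpos]
    nlinarith
  have hkζpos : 0 < (k : ℝ) * ζ := by positivity
  have hcos : 0 < Real.cos ζ := by
    apply Real.cos_pos_of_mem_Ioo
    constructor <;> [linarith; linarith]
  have hsinhalf : 0 < Real.sin ((k : ℝ) * ζ / 2) := by
    apply Real.sin_pos_of_pos_of_lt_pi (by positivity)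
    linarith
  have hsinζ : 0 < Real.sin ζ := by
    apply Real.sin_pos_of_pos_of_lt_pi hζpos
    linarith
  have hsinkζ : 0 ≤ Real.sin ((k : ℝ) * ζ) :=
    Real.sin_nonneg_of_nonneg_of_le_pi (le_of_lt hkζpos) hkζle
  set t := μ ^ 2 * deriv h (μ ^ 2) with ht
  have ha : 0 < α k := by rw [hα]; positivity
  have hg : 0 ≤ γ k := by rw [hγ]; positivity
  have hq : 0 < α k * (α k - 2 * t) := by nlinarith
  set s := Real.sqrt (α k * (α k - 2 * t)) with hs
  have hspos : 0 < s := Real.sqrt_pos.mpr hq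
  have hs2 : s ^ 2 = α k * (α k - 2 * t) := Real.sq_sqrt (le_of_lt hq)
  have hδ' : (α k ^ 2 - γ k ^ 2) / (2 * α k) < t := by rw [← hδ]; exact hcond₁
  have hlt : α k ^ 2 - γ k ^ 2 < t * (2 * α k) := by
    rwa [div_lt_iff₀ (by linarith)] at hδ'
  have hg2 : s ^ 2 < γ k ^ 2 := by nlinarith [hs2, hlt]
  have hgs : s < γ k := lt_of_pow_lt_pow_left₀ 2 hg hg2
  have he : α k * (α k - 2 * μ ^ 2 * deriv h (μ ^ 2)) = α k * (α k - 2 * t) := by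
    rw [ht]; ring
  constructor
  · rw [hνm, he]; linarith
  · rw [hνm, hνp, he]; linarith
end

section
/- Let n = 3. Then α_1 = α_2 = −3/2, γ_1 = 3/2 = −γ_2 and δ_1 = δ_2 = 0. Moreover, for k ∈ {1,2}, if α_k/2 < μ²h′(μ²) (i.e. −3/4 < μ²h′(μ²)), then ν_− < ν_+ are real, det m_k(ν) vanishes only at ν = ν_±, the Morse index satisfies n_k(ν) = 0 for ν ∈ (ν_−, ν_+) and n_k(ν) = 1 for ν < ν_− and for ν > ν_+, and the jumps are η_k(ν_±) = ∓σ with σ = sgn(h′(μ²)). -/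
open Matrix

lemma my_trace_eq_sum_eigs {n : Type*} [Fintype n] [DecidableEq n]
    {A : Matrix n n ℂ} (hA : A.IsHermitian) :
    A.trace = ∑ i, (hA.eigenvalues i : ℂ) := by
  conv_lhs => rw [hA.spectral_theorem]
  rw [Unitary.conjStarAlgAut_apply, Matrix.trace_mul_cycle,
    Matrix.mem_unitaryGroup_iff'.mp (Matrix.IsHermitian.eigenvectorUnitary hA).2,
    Matrix.one_mul, Matrix.trace_diagonal]
  rfl

lemma my_card_filter_fin2 (p : Fin 2 → Prop) [DecidablePred p] :
    (Finset.univ.filter p).card = (if p 0 then 1 else 0) + (if p 1 then 1 else 0) := by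
  rw [Finset.card_filter, Fin.sum_univ_two]

lemma my_morse_one {A : Matrix (Fin 2) (Fin 2) ℂ} (hA : A.IsHermitian) {d : ℝ}
    (hdet : A.det = (d : ℂ)) (hd : d < 0) :
    (Finset.univ.filter fun i : Fin 2 => hA.eigenvalues i < 0).card = 1 := by
  have hprod : hA.eigenvalues 0 * hA.eigenvalues 1 = d := by
    have h2 := hA.det_eq_prod_eigenvalues
    rw [hdet, Fin.prod_univ_two] at h2
    norm_cast at h2
    exact ((RCLike.ofReal_injective (K := ℂ)) h2).symm
  have : hA.eigenvalues 0 * hA.eigenvalues 1 < 0 := hprod ▸ hd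
  rcases mul_neg_iff.mp this with ⟨h0, h1⟩ | ⟨h0, h1⟩ <;>
    rw [my_card_filter_fin2] <;> simp [h0, h1, not_lt.mpr h0.le, not_lt.mpr h1.le]

lemma my_morse_zero {A : Matrix (Fin 2) (Fin 2) ℂ} (hA : A.IsHermitian) {d tr : ℝ}
    (hdet : A.det = (d : ℂ)) (hd : 0 < d)
    (htr : A.trace = (tr : ℂ)) (ht : 0 < tr) :
    (Finset.univ.filter fun i : Fin 2 => hA.eigenvalues i < 0).card = 0 := by
  have hprod : hA.eigenvalues 0 * hA.eigenvalues 1 = d := by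
    have h2 := hA.det_eq_prod_eigenvalues
    rw [hdet, Fin.prod_univ_two] at h2
    norm_cast at h2
    exact ((RCLike.ofReal_injective (K := ℂ)) h2).symm
  have hsum : hA.eigenvalues 0 + hA.eigenvalues 1 = tr := by
    have h2 := my_trace_eq_sum_eigs hA
    rw [htr, Fin.sum_univ_two] at h2
    norm_cast at h2
    linarith
  have : 0 < hA.eigenvalues 0 * hA.eigenvalues 1 := hprod ▸ hd
  rcases mul_pos_iff.mp this with ⟨h0, h1⟩ | ⟨h0, h1⟩
  · rw [my_card_filter_fin2]; simp [not_lt.mpr h0.le, not_lt.mpr h1.le]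
  · exfalso; rw [← hsum] at ht; linarith

set_option maxHeartbeats 2000000

/-- Let `n = 3` (so `ζ = 2π/3`), `α_k = 4 cos ζ sin²(kζ/2)`, `γ_k = 2 sin(kζ) sin ζ`,
`δ_k = (α_k² − γ_k²)/(2α_k)`, `h` differentiable, `μ > 0`, and let `B_k`, `m_k(ν)` be
the Hermitian matrices of the text, with Morse index `n_k(ν)` the number of negative
eigenvalues of `m_k(ν)` with multiplicity, `σ = sgn(h′(μ²))`, and
`ν_± = γ_k ± √(α_k(α_k − 2μ²h′(μ²)))`.  Then `α_1 = α_2 = −3/2`, `γ_1 = 3/2 = −γ_2`,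
`δ_1 = δ_2 = 0`.  Moreover, for `k ∈ {1,2}`, if `α_k/2 < μ²h′(μ²)` (i.e.
`−3/4 < μ²h′(μ²)`), then `ν_− < ν_+` are real, `det m_k(ν)` vanishes only at `ν = ν_±`,
the Morse index satisfies `n_k(ν) = 0` on `(ν_−, ν_+)` and `n_k(ν) = 1` for `ν < ν_−`
and for `ν > ν_+`, and the jumps are `η_k(ν_−) = σ`, `η_k(ν_+) = −σ`, where
`η_k(ν₀) = σ(n_k(ν₀ − ρ) − n_k(ν₀ + ρ))` for all sufficiently small `ρ > 0`. -/
theorem stmt_15 (ζ : ℝ) (hζ : ζ = 2 * Real.pi / 3)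
    (α γ δ : ℕ → ℝ)
    (hα : ∀ k : ℕ, α k = 4 * Real.cos ζ * Real.sin (k * ζ / 2) ^ 2)
    (hγ : ∀ k : ℕ, γ k = 2 * Real.sin (k * ζ) * Real.sin ζ)
    (hδ : ∀ k : ℕ, δ k = ((α k) ^ 2 - (γ k) ^ 2) / (2 * α k))
    (h : ℝ → ℝ) (hdiff : Differentiable ℝ h) (μ : ℝ) (hμ : 0 < μ)
    (B : ℕ → Matrix (Fin 2) (Fin 2) ℂ)
    (hB : ∀ k : ℕ, B k =
      !![((-(α k) + 2 * μ ^ 2 * deriv h (μ ^ 2) : ℝ) : ℂ), -(Complex.I * (γ k : ℂ));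
         Complex.I * (γ k : ℂ), ((-(α k) : ℝ) : ℂ)])
    (m : ℕ → ℝ → Matrix (Fin 2) (Fin 2) ℂ)
    (hm : ∀ (k : ℕ) (ν : ℝ), m k ν = B k + !![0, Complex.I * (ν : ℂ);
                                              -(Complex.I * (ν : ℂ)), 0])
    (hH : ∀ (k : ℕ) (ν : ℝ), (m k ν).IsHermitian)
    (morse : ℕ → ℝ → ℕ)
    (hmorse : ∀ (k : ℕ) (ν : ℝ),
      morse k ν = (Finset.univ.filter fun i : Fin 2 => (hH k ν).eigenvalues i < 0).card)
    (σ : ℝ) (hσ : σ = Real.sign (deriv h (μ ^ 2))) :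
    α 1 = -(3/2 : ℝ) ∧ α 2 = -(3/2 : ℝ) ∧
    γ 1 = (3/2 : ℝ) ∧ γ 2 = -(3/2 : ℝ) ∧
    δ 1 = 0 ∧ δ 2 = 0 ∧
    (∀ k ∈ ({1, 2} : Finset ℕ), α k / 2 < μ ^ 2 * deriv h (μ ^ 2) →
      ∀ νm νp : ℝ,
        νm = γ k - Real.sqrt (α k * (α k - 2 * μ ^ 2 * deriv h (μ ^ 2))) →
        νp = γ k + Real.sqrt (α k * (α k - 2 * μ ^ 2 * deriv h (μ ^ 2))) →
        νm < νp ∧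
        (∀ ν : ℝ, (m k ν).det = 0 ↔ ν = νm ∨ ν = νp) ∧
        (∀ ν : ℝ, νm < ν → ν < νp → morse k ν = 0) ∧
        (∀ ν : ℝ, ν < νm → morse k ν = 1) ∧
        (∀ ν : ℝ, νp < ν → morse k ν = 1) ∧
        (∃ ρ₀ > 0, ∀ ρ : ℝ, 0 < ρ → ρ < ρ₀ →
          σ * ((morse k (νm - ρ) : ℝ) - (morse k (νm + ρ) : ℝ)) = σ ∧
          σ * ((morse k (νp - ρ) : ℝ) - (morse k (νp + ρ) : ℝ)) = -σ)) := by
  have hcos : Real.cos ζ = -(1/2) := by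
    rw [hζ, show 2 * Real.pi / 3 = Real.pi - Real.pi/3 by ring, Real.cos_pi_sub,
      Real.cos_pi_div_three]
  have hsin : Real.sin ζ = Real.sqrt 3 / 2 := by
    rw [hζ, show 2 * Real.pi / 3 = Real.pi - Real.pi/3 by ring, Real.sin_pi_sub,
      Real.sin_pi_div_three]
  have h3 : Real.sqrt 3 ^ 2 = 3 := Real.sq_sqrt (by norm_num)
  have hα1 : α 1 = -(3/2 : ℝ) := by
    rw [hα 1, show ((1:ℕ):ℝ) * ζ / 2 = ζ - ζ/2 by push_cast; ring,
      show ζ - ζ/2 = Real.pi/3 by rw [hζ]; ring, Real.sin_pi_div_three, hcos]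
    nlinarith [h3]
  have hα2 : α 2 = -(3/2 : ℝ) := by
    rw [hα 2, show ((2:ℕ):ℝ) * ζ / 2 = ζ by push_cast; ring, hcos, hsin]
    nlinarith [h3]
  have hγ1 : γ 1 = (3/2 : ℝ) := by
    rw [hγ 1, show ((1:ℕ):ℝ) * ζ = ζ by push_cast; ring, hsin]
    nlinarith [h3]
  have hγ2 : γ 2 = -(3/2 : ℝ) := by
    rw [hγ 2, show ((2:ℕ):ℝ) * ζ = Real.pi + Real.pi/3 by push_cast; rw [hζ]; ring,
      Real.sin_add, Real.sin_pi, Real.cos_pi, Real.sin_pi_div_three, hsin]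
    nlinarith [h3]
  have hδ1 : δ 1 = 0 := by rw [hδ 1, hα1, hγ1]; norm_num
  have hδ2 : δ 2 = 0 := by rw [hδ 2, hα2, hγ2]; norm_num
  refine ⟨hα1, hα2, hγ1, hγ2, hδ1, hδ2, ?_⟩
  intro k hk hlt νm νp hνm hνp
  have hαk : α k = -(3/2 : ℝ) := by
    rcases Finset.mem_insert.mp hk with rfl | hk2
    · exact hα1
    · rw [Finset.mem_singleton.mp hk2]; exact hα2
  have hlt' : -(3/4 : ℝ) < μ ^ 2 * deriv h (μ ^ 2) := by rw [hαk] at hlt; linarith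
  have hD : 0 < α k * (α k - 2 * μ ^ 2 * deriv h (μ ^ 2)) := by rw [hαk]; nlinarith
  set s := Real.sqrt (α k * (α k - 2 * μ ^ 2 * deriv h (μ ^ 2))) with hsdef
  have hs : 0 < s := Real.sqrt_pos.mpr hD
  have hs2 : s ^ 2 = α k * (α k - 2 * μ ^ 2 * deriv h (μ ^ 2)) := Real.sq_sqrt hD.le
  subst hνm hνp
  have hent : ∀ ν : ℝ, m k ν =
      !![((-(α k) + 2 * μ ^ 2 * deriv h (μ ^ 2) : ℝ) : ℂ),
         Complex.I * ((ν : ℂ) - (γ k : ℂ));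
         Complex.I * ((γ k : ℂ) - (ν : ℂ)), ((-(α k) : ℝ) : ℂ)] := by
    intro ν
    rw [hm, hB]
    ext i j
    fin_cases i <;> fin_cases j <;> simp <;> ring
  have hdet : ∀ ν : ℝ, (m k ν).det = ((s ^ 2 - (ν - γ k) ^ 2 : ℝ) : ℂ) := by
    intro ν
    rw [hent ν, Matrix.det_fin_two_of, hs2]
    push_cast
    ring_nf
    rw [Complex.I_sq]
    ring
  have htr : ∀ ν : ℝ, (m k ν).trace = ((3 + 2 * μ ^ 2 * deriv h (μ ^ 2) : ℝ) : ℂ) := by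
    intro ν
    rw [hent ν, Matrix.trace_fin_two_of, hαk]
    push_cast
    ring
  have htrpos : (0:ℝ) < 3 + 2 * μ ^ 2 * deriv h (μ ^ 2) := by linarith
  have hmz : ∀ ν : ℝ, γ k - s < ν → ν < γ k + s → morse k ν = 0 := by
    intro ν h1 h2
    rw [hmorse]
    exact my_morse_zero (hH k ν) (hdet ν) (by nlinarith) (htr ν) htrpos
  have hml : ∀ ν : ℝ, ν < γ k - s → morse k ν = 1 := by
    intro ν h1
    rw [hmorse]
    exact my_morse_one (hH k ν) (hdet ν) (by nlinarith)
  have hmr : ∀ ν : ℝ, γ k + s < ν → morse k ν = 1 := by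
    intro ν h1
    rw [hmorse]
    exact my_morse_one (hH k ν) (hdet ν) (by nlinarith)
  refine ⟨by linarith, ?_, hmz, hml, hmr, 2 * s, by linarith, ?_⟩
  · intro ν
    rw [hdet ν, Complex.ofReal_eq_zero]
    constructor
    · intro h0
      have hfac : (ν - (γ k - s)) * (ν - (γ k + s)) = 0 := by linear_combination -h0
      rcases mul_eq_zero.mp hfac with hc | hc
      · left; linarith
      · right; linarith
    · rintro (rfl | rfl) <;> ring
  · intro ρ hρ1 hρ2
    have e1 : morse k (γ k - s - ρ) = 1 := hml _ (by linarith)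
    have e2 : morse k (γ k - s + ρ) = 0 := hmz _ (by linarith) (by linarith)
    have e3 : morse k (γ k + s - ρ) = 0 := hmz _ (by linarith) (by linarith)
    have e4 : morse k (γ k + s + ρ) = 1 := hmr _ (by linarith)
    rw [e1, e2, e3, e4]
    norm_num
end

section
/- Let n ≥ 5. Then δ_k ≤ 0 for k ∈ {1, 2, n−2, n−1} (with δ_1 = δ_{n−1} < 0 and δ_2 = δ_{n−2} = 0), and if n ≥ 6 then δ_k > 0 for every k ∈ {3, …, n−3}. Consequently, for the cubic Schrödinger potential h(x) = x (for which μ²h′(μ²) = μ²), the inequality μ²h′(μ²) < δ_k can hold for some μ > 0 only when k ∈ {3,…,n−3}, in which case it holds exactly for μ ∈ (0, √δ_k). -/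
open Real

/-- Let `n ≥ 5`, `ζ = 2π/n`, `α_k = 4 cos ζ sin²(kζ/2)`, `γ_k = 2 sin(kζ) sin ζ`,
`δ_k = (α_k² − γ_k²)/(2α_k)`.  Then `δ_k ≤ 0` for `k ∈ {1, 2, n−2, n−1}` (with
`δ_1 = δ_{n−1} < 0` and `δ_2 = δ_{n−2} = 0`), and if `n ≥ 6` then `δ_k > 0` for every
`k ∈ {3,…,n−3}`.  Consequently, for the cubic Schrödinger potential `h(x) = x` (for which
`μ²h′(μ²) = μ²`), the inequality `μ²h′(μ²) < δ_k` can hold for some `μ > 0` only when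
`k ∈ {3,…,n−3}`, in which case it holds exactly for `μ ∈ (0, √δ_k)`. -/
theorem stmt_17 (n : ℕ) (hn : 5 ≤ n) (ζ : ℝ) (hζ : ζ = 2 * Real.pi / n)
    (α γ δ : ℕ → ℝ)
    (hα : ∀ k : ℕ, α k = 4 * Real.cos ζ * Real.sin (k * ζ / 2) ^ 2)
    (hγ : ∀ k : ℕ, γ k = 2 * Real.sin (k * ζ) * Real.sin ζ)
    (hδ : ∀ k : ℕ, δ k = ((α k) ^ 2 - (γ k) ^ 2) / (2 * α k))
    (h : ℝ → ℝ) (hh : h = fun x => x) :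
    (∀ k ∈ ({1, 2, n - 2, n - 1} : Finset ℕ), δ k ≤ 0) ∧
    (δ 1 = δ (n - 1) ∧ δ 1 < 0) ∧
    (δ 2 = δ (n - 2) ∧ δ 2 = 0) ∧
    (6 ≤ n → ∀ k ∈ Finset.Icc 3 (n - 3), 0 < δ k) ∧
    (∀ μ : ℝ, 0 < μ → μ ^ 2 * deriv h (μ ^ 2) = μ ^ 2) ∧
    (∀ k ∈ Finset.Icc 1 (n - 1), ∀ μ : ℝ, 0 < μ →
      μ ^ 2 * deriv h (μ ^ 2) < δ k → k ∈ Finset.Icc 3 (n - 3)) ∧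
    (∀ k ∈ Finset.Icc 3 (n - 3), ∀ μ : ℝ, 0 < μ →
      (μ ^ 2 * deriv h (μ ^ 2) < δ k ↔ μ < Real.sqrt (δ k))) := by
  have hπ : (0:ℝ) < π := Real.pi_pos
  have hn5 : (5:ℝ) ≤ (n:ℝ) := by exact_mod_cast hn
  have hnpos : (0:ℝ) < (n:ℝ) := by linarith
  have hζpos : 0 < ζ := by rw [hζ]; positivity
  have hζle : ζ ≤ 2 * π / 5 := by
    rw [hζ]; rw [div_le_div_iff₀ hnpos (by norm_num)]; nlinarith
  have hζlt : ζ < π / 2 := by linarith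
  have hc : 0 < Real.cos ζ := Real.cos_pos_of_mem_Ioo ⟨by linarith, hζlt⟩
  have hc' : Real.cos ζ ≠ 0 := ne_of_gt hc
  -- key formula
  have key : ∀ k : ℕ, 1 ≤ k → k ≤ n - 1 →
      δ k = (Real.cos (2*ζ) - Real.cos (k*ζ)) / Real.cos ζ := by
    intro k hk1 hk2
    have hkn : (k:ℝ) < (n:ℝ) := by
      have : k < n := by omega
      exact_mod_cast this
    have hk1' : (1:ℝ) ≤ (k:ℝ) := by exact_mod_cast hk1
    have hζn : ζ * (n:ℝ) = 2*π := by rw [hζ]; field_simp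
    have hs : 0 < Real.sin (k*ζ/2) := by
      apply Real.sin_pos_of_pos_of_lt_pi
      · positivity
      · nlinarith
    have hs' : Real.sin (k*ζ/2) ≠ 0 := ne_of_gt hs
    rw [hδ, hα, hγ]
    have h4' : Real.sin (k*ζ/2)^2 + Real.cos (k*ζ/2)^2 = 1 :=
      Real.sin_sq_add_cos_sq _
    have h1 : Real.sin ((k:ℝ)*ζ) = 2 * Real.sin (k*ζ/2) * Real.cos (k*ζ/2) := by
      have := Real.sin_two_mul ((k:ℝ)*ζ/2)
      rw [show 2*((k:ℝ)*ζ/2) = (k:ℝ)*ζ by ring] at this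
      linarith
    have h2 : Real.cos ((k:ℝ)*ζ) = 1 - 2 * Real.sin (k*ζ/2)^2 := by
      have := Real.cos_two_mul ((k:ℝ)*ζ/2)
      rw [show 2*((k:ℝ)*ζ/2) = (k:ℝ)*ζ by ring] at this
      nlinarith [h4']
    have h3 : Real.cos (2*ζ) = 2 * Real.cos ζ^2 - 1 := Real.cos_two_mul ζ
    have h4 : Real.sin (k*ζ/2)^2 + Real.cos (k*ζ/2)^2 = 1 :=
      Real.sin_sq_add_cos_sq _
    have h5 : Real.sin ζ^2 + Real.cos ζ^2 = 1 := Real.sin_sq_add_cos_sq ζ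
    rw [h1, h2, h3]
    field_simp
    linear_combination (-(16*Real.sin ζ^2)) * h4' +
      (-(16*(1 - Real.sin (k*ζ/2)^2))) * h5
  -- values for special k
  have hcast1 : ((n - 1 : ℕ) : ℝ) = (n:ℝ) - 1 := by
    have : (1:ℕ) ≤ n := by omega
    push_cast [Nat.cast_sub this]; ring
  have hcast2 : ((n - 2 : ℕ) : ℝ) = (n:ℝ) - 2 := by
    have : (2:ℕ) ≤ n := by omega
    push_cast [Nat.cast_sub this]; ring
  have hnζ : (n:ℝ) * ζ = 2 * π := by rw [hζ]; field_simp
  have hδ1 : δ 1 = (Real.cos (2*ζ) - Real.cos ζ) / Real.cos ζ := by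
    rw [key 1 le_rfl (by omega)]; norm_num
  have hδn1 : δ (n-1) = δ 1 := by
    rw [key (n-1) (by omega) le_rfl, hδ1, hcast1]
    have : ((n:ℝ) - 1) * ζ = 2*π - ζ := by rw [← hnζ]; ring
    rw [this, Real.cos_two_pi_sub]
  have hδ2 : δ 2 = 0 := by
    rw [key 2 (by omega) (by omega)]
    norm_num
  have hδn2 : δ (n-2) = 0 := by
    rw [key (n-2) (by omega) (by omega), hcast2]
    have : ((n:ℝ) - 2) * ζ = 2*π - 2*ζ := by rw [← hnζ]; ring
    rw [this, Real.cos_two_pi_sub]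
    simp
  have hδ1neg : δ 1 < 0 := by
    rw [hδ1]
    apply div_neg_of_neg_of_pos _ hc
    have : Real.cos (2*ζ) < Real.cos ζ := by
      apply Real.cos_lt_cos_of_nonneg_of_le_pi (le_of_lt hζpos) _ (by linarith)
      linarith
    linarith
  -- positivity on middle range
  have hmid : ∀ k : ℕ, 3 ≤ k → k ≤ n - 3 → 0 < δ k := by
    intro k hk3 hkn3
    have h6n : 6 ≤ n := by omega
    rw [key k (by omega) (by omega)]
    apply div_pos _ hc
    have hk3' : (3:ℝ) ≤ (k:ℝ) := by exact_mod_cast hk3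
    have hkn3' : (k:ℝ) ≤ (n:ℝ) - 3 := by
      have : (k:ℝ) ≤ ((n-3:ℕ):ℝ) := by exact_mod_cast hkn3
      have h3 : (3:ℕ) ≤ n := by omega
      rw [Nat.cast_sub h3] at this
      push_cast at this ⊢; linarith
    have h2ζ : 2*ζ < (k:ℝ)*ζ := by nlinarith
    have hub : (k:ℝ)*ζ < 2*π - 2*ζ := by
      have : (k:ℝ)*ζ ≤ ((n:ℝ)-3)*ζ := by nlinarith
      have h2 : ((n:ℝ)-3)*ζ = 2*π - 3*ζ := by rw [← hnζ]; ring
      linarith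
    have h2ζπ : 2*ζ ≤ π := by linarith
    have goal : Real.cos ((k:ℝ)*ζ) < Real.cos (2*ζ) := by
      rcases le_or_gt ((k:ℝ)*ζ) π with hle | hgt
      · exact Real.cos_lt_cos_of_nonneg_of_le_pi (by positivity) hle h2ζ
      · have : Real.cos ((k:ℝ)*ζ) = Real.cos (2*π - (k:ℝ)*ζ) := by
          rw [Real.cos_two_pi_sub]
        rw [this]
        apply Real.cos_lt_cos_of_nonneg_of_le_pi (by positivity) (by linarith)
        linarith
    linarith
  have hderiv : ∀ x : ℝ, deriv h x = 1 := by
    intro x; rw [hh]; simp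
  refine ⟨?_, ⟨hδn1.symm, hδ1neg⟩, ⟨hδ2.trans hδn2.symm, hδ2⟩, ?_, ?_, ?_, ?_⟩
  · intro k hk
    simp only [Finset.mem_insert, Finset.mem_singleton] at hk
    rcases hk with rfl | rfl | rfl | rfl
    · linarith
    · exact le_of_eq hδ2
    · exact le_of_eq hδn2
    · rw [hδn1]; linarith
  · intro _ k hk
    rw [Finset.mem_Icc] at hk
    exact hmid k hk.1 hk.2
  · intro μ _; rw [hderiv]; ring
  · intro k hk μ hμ hlt
    rw [Finset.mem_Icc] at hk
    rw [hderiv, mul_one] at hlt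
    rw [Finset.mem_Icc]
    by_contra hcon
    push_neg at hcon
    have hδk : δ k ≤ 0 := by
      rcases Nat.lt_or_ge k 3 with h3 | h3
      · have : k = 1 ∨ k = 2 := by omega
        rcases this with rfl | rfl
        · linarith
        · exact le_of_eq hδ2
      · have : n - 3 < k := hcon h3
        have : k = n - 2 ∨ k = n - 1 := by omega
        rcases this with rfl | rfl
        · exact le_of_eq hδn2
        · rw [hδn1]; linarith
    have h0 : 0 ≤ μ^2 := sq_nonneg μ
    linarith
  · intro k hk μ hμ
    rw [Finset.mem_Icc] at hk
    have hpos := hmid k hk.1 hk.2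
    rw [hderiv, mul_one]
    exact (Real.lt_sqrt (le_of_lt hμ)).symm
end

section
/- For the saturable potential h(x) = (1+x)^{−1} one has μ²h′(μ²) = −μ²/(1+μ²)², and: (i) for all μ > 0, −1/4 ≤ −μ²/(1+μ²)² < 0, with equality −1/4 exactly at μ = 1; (ii) if n ≥ 16 then −1/4 < δ_1 < 0, and hence there exist unique μ_− ∈ (0,1) and μ_+ ∈ (1,∞) with −μ_±²/(1+μ_±²)² = δ_1, such that −μ²/(1+μ²)² < δ_1 for μ ∈ (μ_−, μ_+) and δ_1 < −μ²/(1+μ²)² for μ ∈ (0, μ_−) ∪ (μ_+, ∞); (iii) if 5 ≤ n ≤ 15 then δ_1 < −1/4, so that δ_1 < −μ²/(1+μ²)² for every μ > 0. -/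
lemma satur_levels (s : ℝ) (hs0 : 0 < s) (hs4 : s < 1/4) :
    ∃ μm μp : ℝ,
      μm ∈ Set.Ioo (0 : ℝ) 1 ∧ μp ∈ Set.Ioi (1 : ℝ) ∧
      -μm ^ 2 / (1 + μm ^ 2) ^ 2 = -s ∧
      -μp ^ 2 / (1 + μp ^ 2) ^ 2 = -s ∧
      (∀ μ : ℝ, 0 < μ → -μ ^ 2 / (1 + μ ^ 2) ^ 2 = -s → μ = μm ∨ μ = μp) ∧
      (∀ μ : ℝ, μ ∈ Set.Ioo μm μp → -μ ^ 2 / (1 + μ ^ 2) ^ 2 < -s) ∧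
      (∀ μ : ℝ, μ ∈ Set.Ioo (0 : ℝ) μm ∪ Set.Ioi μp →
        -s < -μ ^ 2 / (1 + μ ^ 2) ^ 2) := by
  obtain ⟨D, hD2, hDpos⟩ : ∃ D : ℝ, D ^ 2 = 1 - 4*s ∧ 0 < D :=
    ⟨Real.sqrt (1 - 4*s), Real.sq_sqrt (by linarith), Real.sqrt_pos.2 (by linarith)⟩
  have hD1 : D < 1 - 2*s := by nlinarith [sq_nonneg (D - (1 - 2*s)), sq_nonneg (D + (1 - 2*s))]
  set tm : ℝ := (1 - 2*s - D)/(2*s) with htm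
  set tp : ℝ := (1 - 2*s + D)/(2*s) with htp
  have h2s : (0:ℝ) < 2*s := by linarith
  have htm0 : 0 < tm := div_pos (by linarith) h2s
  have htp1 : 1 < tp := by rw [htp, lt_div_iff₀ h2s]; linarith
  have htmtp : tm < tp := by rw [htm, htp, div_lt_div_iff₀ h2s h2s]; nlinarith
  have hsum : s*tm + s*tp = 1 - 2*s := by rw [htm, htp]; field_simp; ring
  have hmul : s*(tm*tp) = s := by
    have key : (1 - 2*s - D)*(1 - 2*s + D) = 4*s^2 := by linear_combination -hD2
    have h1 : tm*tp = ((1 - 2*s - D)*(1 - 2*s + D))/(4*s^2) := by rw [htm, htp]; ring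
    rw [h1, key]
    field_simp
  have htmtp1 : tm * tp = 1 := mul_left_cancel₀ (ne_of_gt hs0) (hmul.trans (mul_one s).symm)
  have htp0 : 0 < tp := by linarith
  have htm1 : tm < 1 := by nlinarith [mul_pos htm0 (show (0:ℝ) < tp - 1 by linarith)]
  have hquad : ∀ t : ℝ, s*(1+t)^2 - t = s*(t - tm)*(t - tp) := by
    intro t; linear_combination t*hsum - hmul
  refine ⟨Real.sqrt tm, Real.sqrt tp, ?_, ?_, ?_, ?_, ?_, ?_, ?_⟩
  · exact ⟨Real.sqrt_pos.2 htm0, by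
      have := Real.sqrt_lt_sqrt htm0.le htm1
      simpa [Real.sqrt_one] using this⟩
  · have := Real.sqrt_lt_sqrt (by norm_num : (0:ℝ) ≤ 1) htp1
    simpa [Real.sqrt_one] using this
  · have h1 : Real.sqrt tm ^ 2 = tm := Real.sq_sqrt htm0.le
    have h2 : (0:ℝ) < (1 + tm)^2 := by positivity
    rw [h1, div_eq_iff (ne_of_gt h2)]
    have := hquad tm; nlinarith
  · have h1 : Real.sqrt tp ^ 2 = tp := Real.sq_sqrt htp0.le
    have h2 : (0:ℝ) < (1 + tp)^2 := by positivity
    rw [h1, div_eq_iff (ne_of_gt h2)]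
    have := hquad tp; nlinarith
  · intro μ hμ heq
    have h2 : (0:ℝ) < (1 + μ^2)^2 := by positivity
    rw [div_eq_iff (ne_of_gt h2)] at heq
    have hq : s*(μ^2 - tm)*(μ^2 - tp) = 0 := by rw [← hquad]; linarith
    rcases mul_eq_zero.1 hq with h | h
    · rcases mul_eq_zero.1 h with h | h
      · exact absurd h (ne_of_gt hs0)
      · left
        have hx : μ^2 = tm := by linarith
        rw [← hx, Real.sqrt_sq hμ.le]
    · right
      have hx : μ^2 = tp := by linarith
      rw [← hx, Real.sqrt_sq hμ.le]
  · rintro μ ⟨h1, h2⟩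
    have hm0 : (0:ℝ) ≤ Real.sqrt tm := Real.sqrt_nonneg _
    have hμ0 : 0 < μ := lt_of_le_of_lt hm0 h1
    have ht1 : tm < μ^2 := by
      have := pow_lt_pow_left₀ h1 hm0 two_ne_zero
      rwa [Real.sq_sqrt htm0.le] at this
    have ht2 : μ^2 < tp := by
      have := pow_lt_pow_left₀ h2 hμ0.le two_ne_zero
      rwa [Real.sq_sqrt htp0.le] at this
    have hden : (0:ℝ) < (1 + μ^2)^2 := by positivity
    rw [div_lt_iff₀ hden]
    have hq := hquad (μ^2)
    nlinarith [mul_pos hs0 (mul_pos (show (0:ℝ) < μ^2 - tm by linarith)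
      (show (0:ℝ) < tp - μ^2 by linarith))]
  · intro μ hμ
    have hden : (0:ℝ) < (1 + μ^2)^2 := by positivity
    rw [lt_div_iff₀ hden]
    have hq := hquad (μ^2)
    rcases hμ with ⟨h1, h2⟩ | h1
    · have ht : μ^2 < tm := by
        have := pow_lt_pow_left₀ h2 h1.le two_ne_zero
        rwa [Real.sq_sqrt htm0.le] at this
      nlinarith [mul_pos hs0 (mul_pos (show (0:ℝ) < tm - μ^2 by linarith)
        (show (0:ℝ) < tp - μ^2 by linarith))]
    · simp only [Set.mem_Ioi] at h1
      have hp0 : (0:ℝ) ≤ Real.sqrt tp := Real.sqrt_nonneg _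
      have ht : tp < μ^2 := by
        have := pow_lt_pow_left₀ h1 hp0 two_ne_zero
        rwa [Real.sq_sqrt htp0.le] at this
      nlinarith [mul_pos hs0 (mul_pos (show (0:ℝ) < μ^2 - tm by linarith)
        (show (0:ℝ) < μ^2 - tp by linarith))]

lemma delta_one_formula (ζ : ℝ) (hc0 : Real.cos ζ ≠ 0)
    (a g : ℝ)
    (ha : a = 4 * Real.cos ζ * Real.sin ((1:ℕ) * ζ / 2) ^ 2)
    (hg : g = 2 * Real.sin ((1:ℕ) * ζ) * Real.sin ζ) :
    (a ^ 2 - g ^ 2) / (2 * a) =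
      -(((1 - Real.cos ζ) * (1 + 2 * Real.cos ζ)) / Real.cos ζ) := by
  set c : ℝ := Real.cos ζ with hcd
  have hs2 : Real.sin (ζ/2) ^ 2 = (1 - c)/2 := by
    have h1 := Real.sin_sq (ζ/2)
    have h2 := Real.cos_sq (ζ/2)
    rw [h1, h2, show 2*(ζ/2) = ζ by ring]
    ring
  have ha' : a = 2*c*(1-c) := by
    rw [ha]; push_cast; rw [one_mul, hs2]; ring
  have hg' : g = 2*(1 - c^2) := by
    rw [hg]; push_cast
    rw [one_mul, show 2 * Real.sin ζ * Real.sin ζ = 2 * Real.sin ζ ^ 2 by ring,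
      Real.sin_sq]
  by_cases hc1 : c = 1
  · rw [ha', hg', hc1]; norm_num
  · have h1c : (1:ℝ) - c ≠ 0 := sub_ne_zero.2 (Ne.symm hc1)
    have hane : 2*(2*c*(1-c)) ≠ 0 :=
      mul_ne_zero two_ne_zero (mul_ne_zero (mul_ne_zero two_ne_zero hc0) h1c)
    rw [ha', hg', ← neg_div, div_eq_div_iff hane hc0]
    ring

set_option maxHeartbeats 1000000 in
/-- Let `n ≥ 3`, `ζ = 2π/n`, `α_k = 4 cos ζ sin²(kζ/2)`, `γ_k = 2 sin(kζ) sin ζ`,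
`δ_k = (α_k² − γ_k²)/(2α_k)`.  For the saturable potential `h(x) = (1+x)⁻¹` one has
`μ²h′(μ²) = −μ²/(1+μ²)²`, and:
(i) for all `μ > 0`, `−1/4 ≤ −μ²/(1+μ²)² < 0`, with equality `−1/4` exactly at `μ = 1`;
(ii) if `n ≥ 16` then `−1/4 < δ_1 < 0`, and hence there exist unique `μ_− ∈ (0,1)` and
`μ_+ ∈ (1,∞)` with `−μ_±²/(1+μ_±²)² = δ_1`, such that `−μ²/(1+μ²)² < δ_1` for
`μ ∈ (μ_−, μ_+)` and `δ_1 < −μ²/(1+μ²)²` for `μ ∈ (0, μ_−) ∪ (μ_+, ∞)`;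
(iii) if `5 ≤ n ≤ 15` then `δ_1 < −1/4`, so `δ_1 < −μ²/(1+μ²)²` for every `μ > 0`. -/
theorem stmt_18 (n : ℕ) (hn : 3 ≤ n) (ζ : ℝ) (hζ : ζ = 2 * Real.pi / n)
    (α γ δ : ℕ → ℝ)
    (hα : ∀ k : ℕ, α k = 4 * Real.cos ζ * Real.sin (k * ζ / 2) ^ 2)
    (hγ : ∀ k : ℕ, γ k = 2 * Real.sin (k * ζ) * Real.sin ζ)
    (hδ : ∀ k : ℕ, δ k = ((α k) ^ 2 - (γ k) ^ 2) / (2 * α k))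
    (h : ℝ → ℝ) (hh : h = fun x => (1 + x)⁻¹) :
    (∀ μ : ℝ, 0 < μ → μ ^ 2 * deriv h (μ ^ 2) = -μ ^ 2 / (1 + μ ^ 2) ^ 2) ∧
    -- (i)
    (∀ μ : ℝ, 0 < μ →
      (-(1/4 : ℝ) ≤ -μ ^ 2 / (1 + μ ^ 2) ^ 2 ∧ -μ ^ 2 / (1 + μ ^ 2) ^ 2 < 0) ∧
      (-μ ^ 2 / (1 + μ ^ 2) ^ 2 = -(1/4 : ℝ) ↔ μ = 1)) ∧
    -- (ii)
    (16 ≤ n →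
      (-(1/4 : ℝ) < δ 1 ∧ δ 1 < 0) ∧
      ∃ μm μp : ℝ,
        μm ∈ Set.Ioo (0 : ℝ) 1 ∧ μp ∈ Set.Ioi (1 : ℝ) ∧
        -μm ^ 2 / (1 + μm ^ 2) ^ 2 = δ 1 ∧
        -μp ^ 2 / (1 + μp ^ 2) ^ 2 = δ 1 ∧
        (∀ μ : ℝ, 0 < μ → -μ ^ 2 / (1 + μ ^ 2) ^ 2 = δ 1 → μ = μm ∨ μ = μp) ∧
        (∀ μ : ℝ, μ ∈ Set.Ioo μm μp → -μ ^ 2 / (1 + μ ^ 2) ^ 2 < δ 1) ∧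
        (∀ μ : ℝ, μ ∈ Set.Ioo (0 : ℝ) μm ∪ Set.Ioi μp →
          δ 1 < -μ ^ 2 / (1 + μ ^ 2) ^ 2)) ∧
    -- (iii)
    (5 ≤ n → n ≤ 15 →
      δ 1 < -(1/4 : ℝ) ∧ ∀ μ : ℝ, 0 < μ → δ 1 < -μ ^ 2 / (1 + μ ^ 2) ^ 2) := by
  have hπ := Real.pi_pos
  have hπu : Real.pi < 3.141593 := Real.pi_lt_d6
  have hπl : 3.141592 < Real.pi := Real.pi_gt_d6
  -- part (i)
  have parti : ∀ μ : ℝ, 0 < μ →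
      (-(1/4 : ℝ) ≤ -μ ^ 2 / (1 + μ ^ 2) ^ 2 ∧ -μ ^ 2 / (1 + μ ^ 2) ^ 2 < 0) ∧
      (-μ ^ 2 / (1 + μ ^ 2) ^ 2 = -(1/4 : ℝ) ↔ μ = 1) := by
    intro μ hμ
    have hden : (0:ℝ) < (1 + μ^2)^2 := by positivity
    refine ⟨⟨?_, ?_⟩, ?_, ?_⟩
    · rw [le_div_iff₀ hden]
      nlinarith [sq_nonneg (μ^2 - 1)]
    · exact div_neg_of_neg_of_pos (by nlinarith) hden
    · intro heq
      rw [div_eq_iff (ne_of_gt hden)] at heq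
      have h2 : (μ^2 - 1)^2 = 0 := by linear_combination 4*heq
      have h3 : μ^2 - 1 = 0 := by
        exact pow_eq_zero_iff two_ne_zero |>.1 h2
      have h4 : (μ - 1)*(μ + 1) = 0 := by linear_combination h3
      rcases mul_eq_zero.1 h4 with h5 | h5
      · linarith
      · linarith
    · rintro rfl; norm_num
  refine ⟨?_, parti, ?_, ?_⟩
  -- derivative
  · intro μ hμ
    have hne : (1 + μ^2) ≠ 0 := by positivity
    have hd : HasDerivAt h (-1 / (1 + μ^2)^2) (μ^2) := by
      rw [hh]
      exact ((hasDerivAt_id' (μ^2)).const_add 1).inv hne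
    rw [hd.deriv]
    field_simp
  -- part (ii)
  · intro hn16
    have hn16R : (16:ℝ) ≤ (n:ℝ) := by exact_mod_cast hn16
    have hnpos : (0:ℝ) < (n:ℝ) := by linarith
    have hζ0 : 0 < ζ := by rw [hζ]; exact div_pos (by linarith) hnpos
    have hζle : ζ ≤ Real.pi/8 := by
      rw [hζ, div_le_div_iff₀ hnpos (by norm_num)]
      nlinarith
    have hζnum : ζ ≤ 0.39269913 := by nlinarith
    set c : ℝ := Real.cos ζ with hcdef
    have hcos_lb : 1 - ζ^2/2 ≤ c := Real.one_sub_sq_div_two_le_cos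
    have hζsq : ζ^2 ≤ 0.1543 := by nlinarith
    have hclb : (0.9228:ℝ) ≤ c := by nlinarith
    have hne1 : c ≠ 1 := by
      intro hc
      have h0 : ζ = 0 := (Real.cos_eq_one_iff_of_lt_of_lt
        (by linarith) (by linarith)).1 hc
      linarith
    have hclt1 : c < 1 := lt_of_le_of_ne (Real.cos_le_one ζ) hne1
    have hc0 : (0:ℝ) < c := by linarith
    have hδ1 : δ 1 = -((1 - c)*(1 + 2*c)/c) := by
      rw [hδ 1]
      exact delta_one_formula ζ (ne_of_gt hc0) _ _ (hα 1) (hγ 1)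
    set s : ℝ := (1 - c)*(1 + 2*c)/c with hsdef
    have hs0 : 0 < s := div_pos (mul_pos (by linarith) (by linarith)) hc0
    have hs4 : s < 1/4 := by
      rw [hsdef, div_lt_iff₀ hc0]
      nlinarith [mul_nonneg (show (0:ℝ) ≤ c - 0.9228 by linarith) hc0.le]
    constructor
    · constructor
      · rw [hδ1]; linarith
      · rw [hδ1]; linarith
    · rw [hδ1]
      exact satur_levels s hs0 hs4
  -- part (iii)
  · intro hn5 hn15
    have hn5R : (5:ℝ) ≤ (n:ℝ) := by exact_mod_cast hn5
    have hn15R : (n:ℝ) ≤ 15 := by exact_mod_cast hn15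
    have hnpos : (0:ℝ) < (n:ℝ) := by linarith
    have hζ0 : 0 < ζ := by rw [hζ]; exact div_pos (by linarith) hnpos
    have hζub : ζ ≤ 2*Real.pi/5 := by
      rw [hζ, div_le_div_iff₀ hnpos (by norm_num)]
      nlinarith
    have hζlb : 2*Real.pi/15 ≤ ζ := by
      rw [hζ, div_le_div_iff₀ (by norm_num) hnpos]
      nlinarith
    set c : ℝ := Real.cos ζ with hcdef
    have hc0 : (0:ℝ) < c :=
      Real.cos_pos_of_mem_Ioo ⟨by linarith, by linarith⟩
    have hcub' : c ≤ Real.cos (2*Real.pi/15) :=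
      Real.cos_le_cos_of_nonneg_of_le_pi (by positivity) (by linarith) hζlb
    have hxpos : (0:ℝ) < 2*Real.pi/15 := by positivity
    have hxl : (0.4188789:ℝ) ≤ 2*Real.pi/15 := by linarith
    have hxu : 2*Real.pi/15 ≤ (0.4188791:ℝ) := by linarith
    have hx1 : |2*Real.pi/15| ≤ 1 := by
      rw [abs_of_pos hxpos]; linarith
    have hcb := Real.cos_bound hx1
    have h1 := (abs_le.1 hcb).2
    rw [abs_of_pos hxpos] at h1
    have hx2 : (0.1754595:ℝ) ≤ (2*Real.pi/15)^2 := by nlinarith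
    have hx2u : (2*Real.pi/15)^2 ≤ (0.17546:ℝ) := by nlinarith
    have hx4 : (2*Real.pi/15)^4 ≤ (0.0307863:ℝ) := by nlinarith
    have hcub : c ≤ 0.91388 := by
      have : Real.cos (2*Real.pi/15) ≤ 1 - (2*Real.pi/15)^2/2 + (2*Real.pi/15)^4*(5/96) := by
        linarith
      nlinarith
    have hδ1 : δ 1 = -((1 - c)*(1 + 2*c)/c) := by
      rw [hδ 1]
      exact delta_one_formula ζ (ne_of_gt hc0) _ _ (hα 1) (hγ 1)
    have hs : (1:ℝ)/4 < (1 - c)*(1 + 2*c)/c := by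
      rw [lt_div_iff₀ hc0]
      nlinarith [mul_nonneg hc0.le (show (0:ℝ) ≤ 0.91388 - c by linarith)]
    constructor
    · rw [hδ1]; linarith
    · intro μ hμ
      have hb := (parti μ hμ).1.1
      rw [hδ1]; linarith
end
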